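/- arXiv:2203.02549 — 4 statements merged into one kernel-verified Lean document; each statement's English description precedes it below -/
import Mathlib

section
/- Let α, β : Fin N → ℝ be positive and let μ₁, μ₂ ≥ 0 with μ₁ + μ₂ > 0, and suppose p l := min (1 / (μ₁ · α l + μ₂ · β l)) 1 for each l. Then for every q : Fin N → ℝ with 0 < q l ≤ 1 for all l, ∑_l α l · q l ≤ ∑_l α l · p l, and ∑_l β l · q l ≤ ∑_l β l · p l, we have ∑_l log (q l) ≤ ∑_l log (p l). -/
open Finset

theorem stmt_6 (N : ℕ) (α β : Fin N → ℝ) (hα : ∀ l, 0 < α l) (hβ : ∀ l, 0 < β l)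
    (μ₁ μ₂ : ℝ) (hμ₁ : 0 ≤ μ₁) (hμ₂ : 0 ≤ μ₂) (hμ : 0 < μ₁ + μ₂)
    (p : Fin N → ℝ) (hp : ∀ l, p l = min (1 / (μ₁ * α l + μ₂ * β l)) 1) :
    ∀ q : Fin N → ℝ, (∀ l, 0 < q l ∧ q l ≤ 1) →
      (∑ l, α l * q l ≤ ∑ l, α l * p l) →
      (∑ l, β l * q l ≤ ∑ l, β l * p l) →
      ∑ l, Real.log (q l) ≤ ∑ l, Real.log (p l) := by
  intro q hq h1 h2
  set c : Fin N → ℝ := fun l => μ₁ * α l + μ₂ * β l with hc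
  have hcpos : ∀ l, 0 < c l := by
    intro l
    have : 0 < (μ₁ + μ₂) * min (α l) (β l) :=
      mul_pos hμ (lt_min (hα l) (hβ l))
    calc (0:ℝ) < (μ₁ + μ₂) * min (α l) (β l) := this
      _ ≤ μ₁ * α l + μ₂ * β l := by
          rw [add_mul]
          gcongr
          · exact min_le_left _ _
          · exact min_le_right _ _
  have hppos : ∀ l, 0 < p l := by
    intro l
    rw [hp l]
    exact lt_min (one_div_pos.mpr (hcpos l)) one_pos
  -- pointwise: log (q l) - log (p l) ≤ c l * (q l - p l)
  have key : ∀ l, Real.log (q l) - Real.log (p l) ≤ c l * (q l - p l) := by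
    intro l
    have hq0 := (hq l).1
    have hq1 := (hq l).2
    have hp0 := hppos l
    have hrat : 0 < q l / p l := div_pos hq0 hp0
    have hlog : Real.log (q l / p l) ≤ q l / p l - 1 :=
      Real.log_le_sub_one_of_pos hrat
    rw [Real.log_div (ne_of_gt hq0) (ne_of_gt hp0)] at hlog
    have step : q l / p l - 1 ≤ c l * (q l - p l) := by
      rcases le_or_gt (1 / c l) 1 with h | h
      · have hpe : p l = 1 / c l := by rw [hp l]; exact min_eq_left h
        have hcne := (hcpos l).ne'
        rw [hpe]
        have heq : q l / (1 / c l) - 1 = c l * (q l - 1 / c l) := by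
          field_simp
        rw [heq]
      · have hpe : p l = 1 := by rw [hp l]; exact min_eq_right h.le
        rw [hpe]
        have hc1 : c l < 1 := by
          have hc0 := hcpos l
          rw [lt_div_iff₀ hc0, one_mul] at h
          exact h
        rw [div_one]
        nlinarith [mul_nonneg (sub_nonneg.mpr hc1.le) (sub_nonneg.mpr hq1)]
    exact hlog.trans step
  have hsum : ∑ l, (Real.log (q l) - Real.log (p l)) ≤ ∑ l, c l * (q l - p l) :=
    Finset.sum_le_sum fun l _ => key l
  have hbudget : ∑ l, c l * (q l - p l) ≤ 0 := by
    have : ∑ l, c l * (q l - p l)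
        = μ₁ * (∑ l, α l * q l - ∑ l, α l * p l)
        + μ₂ * (∑ l, β l * q l - ∑ l, β l * p l) := by
      simp only [← Finset.sum_sub_distrib, Finset.mul_sum]
      rw [← Finset.sum_add_distrib]
      congr 1; ext l; ring
    rw [this]
    have := mul_nonpos_of_nonneg_of_nonpos hμ₁ (by linarith : ∑ l, α l * q l - ∑ l, α l * p l ≤ 0)
    have := mul_nonpos_of_nonneg_of_nonpos hμ₂ (by linarith : ∑ l, β l * q l - ∑ l, β l * p l ≤ 0)
    linarith
  have := le_trans hsum hbudget
  rw [Finset.sum_sub_distrib] at this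
  linarith
end

section
/- For the unconstrained-box version (PreConfig), let α, β : Fin N → ℝ be positive and μ₁, μ₂ > 0, and set p l := 1 / (μ₁ · α l + μ₂ · β l). Then for every q : Fin N → ℝ with q l > 0, ∑_l α l · q l ≤ ∑_l α l · p l, and ∑_l β l · q l ≤ ∑_l β l · p l, we have ∑_l log (q l) ≤ ∑_l log (p l), with equality if and only if q = p. -/
open Finset

theorem stmt_7 (N : ℕ) (α β : Fin N → ℝ) (hα : ∀ l, 0 < α l) (hβ : ∀ l, 0 < β l)
    (μ₁ μ₂ : ℝ) (hμ₁ : 0 < μ₁) (hμ₂ : 0 < μ₂)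
    (p : Fin N → ℝ) (hp : ∀ l, p l = 1 / (μ₁ * α l + μ₂ * β l)) :
    ∀ q : Fin N → ℝ, (∀ l, 0 < q l) →
      (∑ l, α l * q l ≤ ∑ l, α l * p l) →
      (∑ l, β l * q l ≤ ∑ l, β l * p l) →
      (∑ l, Real.log (q l) ≤ ∑ l, Real.log (p l)) ∧
        (∑ l, Real.log (q l) = ∑ l, Real.log (p l) ↔ q = p) := by
  intro q hq hA hB
  have hd : ∀ l, 0 < μ₁ * α l + μ₂ * β l := fun l =>
    add_pos (mul_pos hμ₁ (hα l)) (mul_pos hμ₂ (hβ l))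
  have hp0 : ∀ l, 0 < p l := fun l => by
    rw [hp l]; exact one_div_pos.mpr (hd l)
  -- termwise bound
  have hratio : ∀ l, q l / p l = (μ₁ * α l + μ₂ * β l) * q l := fun l => by
    rw [hp l]; field_simp
  have hterm : ∀ l, Real.log (q l) ≤ Real.log (p l) +
      (μ₁ * (α l * q l - α l * p l) + μ₂ * (β l * q l - β l * p l)) := by
    intro l
    have h1 : Real.log (q l) - Real.log (p l) = Real.log (q l / p l) :=
      (Real.log_div (hq l).ne' (hp0 l).ne').symm
    have h2 : Real.log (q l / p l) ≤ q l / p l - 1 :=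
      Real.log_le_sub_one_of_pos (div_pos (hq l) (hp0 l))
    have h3 : (μ₁ * α l + μ₂ * β l) * p l = 1 := by
      rw [hp l, mul_one_div]; exact div_self (hd l).ne'
    have h4 : q l / p l - 1 = μ₁ * (α l * q l - α l * p l) + μ₂ * (β l * q l - β l * p l) := by
      rw [hratio l, ← h3]; ring
    linarith [h1 ▸ h2, h4]
  have hterm' : ∀ l, q l ≠ p l → Real.log (q l) < Real.log (p l) +
      (μ₁ * (α l * q l - α l * p l) + μ₂ * (β l * q l - β l * p l)) := by
    intro l hne
    have h1 : Real.log (q l) - Real.log (p l) = Real.log (q l / p l) :=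
      (Real.log_div (hq l).ne' (hp0 l).ne').symm
    have hne1 : q l / p l ≠ 1 := by
      intro h
      exact hne ((div_eq_one_iff_eq (hp0 l).ne').mp h)
    have h2 : Real.log (q l / p l) < q l / p l - 1 :=
      Real.log_lt_sub_one_of_pos (div_pos (hq l) (hp0 l)) hne1
    have h3 : (μ₁ * α l + μ₂ * β l) * p l = 1 := by
      rw [hp l, mul_one_div]; exact div_self (hd l).ne'
    have h4 : q l / p l - 1 = μ₁ * (α l * q l - α l * p l) + μ₂ * (β l * q l - β l * p l) := by
      rw [hratio l, ← h3]; ring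
    linarith [h1 ▸ h2, h4]
  have hsum : ∑ l, Real.log (q l) ≤ ∑ l, (Real.log (p l) +
      (μ₁ * (α l * q l - α l * p l) + μ₂ * (β l * q l - β l * p l))) :=
    Finset.sum_le_sum (fun l _ => hterm l)
  have hexp : ∑ l, (Real.log (p l) +
      (μ₁ * (α l * q l - α l * p l) + μ₂ * (β l * q l - β l * p l)))
      = ∑ l, Real.log (p l) + μ₁ * (∑ l, α l * q l - ∑ l, α l * p l)
        + μ₂ * (∑ l, β l * q l - ∑ l, β l * p l) := by
    simp only [Finset.sum_add_distrib, mul_sub, Finset.sum_sub_distrib, ← Finset.mul_sum]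
    ring
  have hle : ∑ l, Real.log (q l) ≤ ∑ l, Real.log (p l) := by
    rw [hexp] at hsum
    nlinarith [mul_nonneg hμ₁.le (sub_nonneg.mpr hA), mul_nonneg hμ₂.le (sub_nonneg.mpr hB)]
  refine ⟨hle, ⟨fun heq => ?_, fun h => by rw [h]⟩⟩
  by_contra hne
  obtain ⟨l0, hl0⟩ := Function.ne_iff.mp hne
  have hstrict : ∑ l, Real.log (q l) < ∑ l, (Real.log (p l) +
      (μ₁ * (α l * q l - α l * p l) + μ₂ * (β l * q l - β l * p l))) :=
    Finset.sum_lt_sum (fun l _ => hterm l) ⟨l0, Finset.mem_univ l0, hterm' l0 hl0⟩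
  rw [hexp] at hstrict
  nlinarith [mul_nonneg hμ₁.le (sub_nonneg.mpr hA), mul_nonneg hμ₂.le (sub_nonneg.mpr hB)]
end

section
/- Let α : Fin N → ℝ be positive, B > 0 with B < ∑_l α l, and let p* be the water-filling solution p* l = min (μ/α l) 1 with μ > 0 chosen so ∑_l α l · p* l = B. If q : Fin N → ℝ satisfies 0 < q l ≤ 1, ∑_l α l · q l ≤ B, and q ≠ p*, then ∑_l log (q l) < ∑_l log (p* l). -/
open Finset

theorem stmt_15 (N : ℕ) (α : Fin N → ℝ) (hα : ∀ l, 0 < α l)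
    (B : ℝ) (hB : 0 < B) (hB' : B < ∑ l, α l)
    (μ : ℝ) (hμ : 0 < μ)
    (pstar : Fin N → ℝ) (hpstar : ∀ l, pstar l = min (μ / α l) 1)
    (hact : ∑ l, α l * pstar l = B) :
    ∀ q : Fin N → ℝ, (∀ l, 0 < q l ∧ q l ≤ 1) → (∑ l, α l * q l ≤ B) →
      q ≠ pstar → ∑ l, Real.log (q l) < ∑ l, Real.log (pstar l) := by
  intro q hq hqB hne
  have hP : ∀ l, 0 < pstar l := by
    intro l; rw [hpstar l]
    exact lt_min (div_pos hμ (hα l)) one_pos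
  -- per-term log bound
  have key : ∀ l, Real.log (q l) - Real.log (pstar l) ≤ (q l - pstar l) / pstar l := by
    intro l
    have h1 : Real.log (q l / pstar l) ≤ q l / pstar l - 1 :=
      Real.log_le_sub_one_of_pos (div_pos (hq l).1 (hP l))
    rw [Real.log_div (ne_of_gt (hq l).1) (ne_of_gt (hP l))] at h1
    have h2 : (q l - pstar l) / pstar l = q l / pstar l - 1 := by
      rw [sub_div, div_self (ne_of_gt (hP l))]
    linarith
  -- strict at some index
  obtain ⟨l₀, hl₀⟩ : ∃ l, q l ≠ pstar l := by
    by_contra h; push_neg at h; exact hne (funext h)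
  have keys : Real.log (q l₀) - Real.log (pstar l₀) < (q l₀ - pstar l₀) / pstar l₀ := by
    have hne1 : q l₀ / pstar l₀ ≠ 1 := by
      intro h
      rw [div_eq_one_iff_eq (ne_of_gt (hP l₀))] at h
      exact hl₀ h
    have h1 : Real.log (q l₀ / pstar l₀) < q l₀ / pstar l₀ - 1 :=
      Real.log_lt_sub_one_of_pos (div_pos (hq l₀).1 (hP l₀)) hne1
    rw [Real.log_div (ne_of_gt (hq l₀).1) (ne_of_gt (hP l₀))] at h1
    have h2 : (q l₀ - pstar l₀) / pstar l₀ = q l₀ / pstar l₀ - 1 := by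
      rw [sub_div, div_self (ne_of_gt (hP l₀))]
    linarith
  have hsum1 : ∑ l, (Real.log (q l) - Real.log (pstar l)) <
      ∑ l, (q l - pstar l) / pstar l :=
    Finset.sum_lt_sum (fun l _ => key l) ⟨l₀, Finset.mem_univ _, keys⟩
  -- bound each term by α l * (q l - pstar l) / μ
  have key2 : ∀ l, (q l - pstar l) / pstar l ≤ α l * (q l - pstar l) / μ := by
    intro l
    rcases le_or_gt (μ / α l) 1 with h | h
    · have hp : pstar l = μ / α l := by rw [hpstar l, min_eq_left h]
      have heq : (q l - μ / α l) / (μ / α l) = α l * (q l - μ / α l) / μ := by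
        field_simp
      rw [hp, heq]
    · have hp : pstar l = 1 := by rw [hpstar l, min_eq_right h.le]
      have hαμ : α l ≤ μ := by
        have := (one_lt_div (hα l)).mp h; linarith
      rw [hp, div_one]
      have hq1 : q l - 1 ≤ 0 := by linarith [(hq l).2]
      rw [le_div_iff₀ hμ]
      nlinarith
  have hsum2 : ∑ l, (q l - pstar l) / pstar l ≤ ∑ l, α l * (q l - pstar l) / μ :=
    Finset.sum_le_sum (fun l _ => key2 l)
  have hsum3 : ∑ l, α l * (q l - pstar l) / μ ≤ 0 := by
    have : ∑ l, α l * (q l - pstar l) / μ = ((∑ l, α l * q l) - B) / μ := by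
      rw [← hact, ← Finset.sum_sub_distrib, ← Finset.sum_div]
      congr 1; apply Finset.sum_congr rfl; intro l _; ring
    rw [this]
    exact div_nonpos_of_nonpos_of_nonneg (by linarith) hμ.le
  have := Finset.sum_sub_distrib (f := fun l => Real.log (q l)) (g := fun l => Real.log (pstar l)) (s := Finset.univ)
  linarith [hsum1, hsum2, hsum3, this]
end

section
/- Let N ≥ 1, let α l > 0 for l ∈ Fin N, and 0 < B ≤ ∑ α l. For the water-filling solution p l = min (μ/α l) 1 of maximizing ∑ log p_l under ∑ α_l p_l ≤ B, the map B ↦ optimal value is monotone strictly increasing in B on (0, ∑ α l]: if 0 < B₁ < B₂ ≤ ∑ α l then max over the B₁-feasible set of ∑ log p_l is strictly less than the max over the B₂-feasible set. -/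
open Finset

theorem stmt_17 (N : ℕ) (hN : 1 ≤ N) (α : Fin N → ℝ) (hα : ∀ l, 0 < α l)
    (B₁ B₂ : ℝ) (hB₁ : 0 < B₁) (h12 : B₁ < B₂) (hB₂ : B₂ ≤ ∑ l, α l)
    (v₁ v₂ : ℝ)
    (hv₁ : IsGreatest ((fun p : Fin N → ℝ => ∑ l, Real.log (p l)) ''
      {p | (∀ l, 0 < p l ∧ p l ≤ 1) ∧ ∑ l, α l * p l ≤ B₁}) v₁)
    (hv₂ : IsGreatest ((fun p : Fin N → ℝ => ∑ l, Real.log (p l)) ''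
      {p | (∀ l, 0 < p l ∧ p l ≤ 1) ∧ ∑ l, α l * p l ≤ B₂}) v₂) :
    v₁ < v₂ := by
  obtain ⟨p, ⟨hpos, hbud⟩, hval⟩ := hv₁.1
  -- some coordinate is < 1
  have hex : ∃ l₀, p l₀ < 1 := by
    by_contra h
    push_neg at h
    have : ∀ l, p l = 1 := fun l => le_antisymm (hpos l).2 (h l)
    have hsum : ∑ l, α l * p l = ∑ l, α l := by
      apply Finset.sum_congr rfl; intro l _; rw [this l, mul_one]
    linarith [hbud, hsum ▸ hbud]
  obtain ⟨l₀, hl₀⟩ := hex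
  set δ : ℝ := min (1 - p l₀) ((B₂ - B₁) / α l₀) with hδ
  have hδpos : 0 < δ := lt_min (by linarith) (div_pos (by linarith) (hα l₀))
  set q : Fin N → ℝ := Function.update p l₀ (p l₀ + δ) with hq
  have hq₀ : q l₀ = p l₀ + δ := Function.update_self _ _ _
  have hqne : ∀ l, l ≠ l₀ → q l = p l := fun l hl => Function.update_of_ne hl _ _
  have hqpos : ∀ l, 0 < q l ∧ q l ≤ 1 := by
    intro l
    by_cases h : l = l₀
    · subst h
      rw [hq₀]
      constructor
      · linarith [(hpos l).1]
      · have := min_le_left (1 - p l) ((B₂ - B₁) / α l)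
        linarith
    · rw [hqne l h]; exact hpos l
  have hsumq : ∑ l, α l * q l ≤ B₂ := by
    have h1 : ∑ l, α l * q l = α l₀ * q l₀ + ∑ l ∈ univ.erase l₀, α l * q l :=
      (Finset.add_sum_erase _ _ (mem_univ l₀)).symm
    have h2 : ∑ l, α l * p l = α l₀ * p l₀ + ∑ l ∈ univ.erase l₀, α l * p l :=
      (Finset.add_sum_erase _ _ (mem_univ l₀)).symm
    have h3 : ∑ l ∈ univ.erase l₀, α l * q l = ∑ l ∈ univ.erase l₀, α l * p l := by
      apply Finset.sum_congr rfl
      intro l hl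
      rw [hqne l (Finset.ne_of_mem_erase hl)]
    have h4 : α l₀ * δ ≤ B₂ - B₁ := by
      have := min_le_right (1 - p l₀) ((B₂ - B₁) / α l₀)
      calc α l₀ * δ ≤ α l₀ * ((B₂ - B₁) / α l₀) := by
            exact mul_le_mul_of_nonneg_left this (hα l₀).le
        _ = B₂ - B₁ := by
            rw [mul_comm]; exact div_mul_cancel₀ _ (hα l₀).ne'
    rw [h1, h3, hq₀]
    nlinarith [hbud, h2]
  have hqval : v₁ < ∑ l, Real.log (q l) := by
    have h1 : ∑ l, Real.log (q l) = Real.log (q l₀) + ∑ l ∈ univ.erase l₀, Real.log (q l) :=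
      (Finset.add_sum_erase _ _ (mem_univ l₀)).symm
    have h2 : ∑ l, Real.log (p l) = Real.log (p l₀) + ∑ l ∈ univ.erase l₀, Real.log (p l) :=
      (Finset.add_sum_erase _ _ (mem_univ l₀)).symm
    have h3 : ∑ l ∈ univ.erase l₀, Real.log (q l) = ∑ l ∈ univ.erase l₀, Real.log (p l) := by
      apply Finset.sum_congr rfl
      intro l hl
      rw [hqne l (Finset.ne_of_mem_erase hl)]
    have hlog : Real.log (p l₀) < Real.log (q l₀) := by
      rw [hq₀]
      exact Real.log_lt_log (hpos l₀).1 (by linarith)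
    have hval' : ∑ l, Real.log (p l) = v₁ := hval
    rw [← hval', h1, h2, h3]
    linarith
  exact lt_of_lt_of_le hqval (hv₂.2 ⟨q, ⟨hqpos, hsumq⟩, rfl⟩)
end
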